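/- The improper integral ∫_{0}^{∞} sin⁴(v/2) / v³ dv converges and equals (ln 2)/4. -/

import Mathlib

/-!
Write `1 / v ^ 3 = ½ ∫₀^∞ t² e^{-vt} dt` and exchange the order of integration (Tonelli, the
integrand being nonnegative). Since `sin⁴(v/2) = (3 - 4 cos v + cos 2v) / 8`, the Laplace transform
`∫₀^∞ e^{-tv} cos (a v) dv = t / (t² + a²)` gives
`∫₀^∞ e^{-tv} sin⁴(v/2) dv = 3 / (2t(t²+1)(t²+4))`, so the integral becomes
`¾ ∫₀^∞ t / ((t²+1)(t²+4)) dt = ¾ · log 4 / 6 = log 2 / 4`.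
-/

open MeasureTheory Real Set Filter Topology Function

theorem integrable_and_integral_eq_of_nonneg_kernel {α β : Type*} [MeasurableSpace α]
    [MeasurableSpace β] {μ : Measure α} {ν : Measure β} [SFinite μ] [SFinite ν]
    {K : α → β → ℝ} (hK : AEStronglyMeasurable (uncurry K) (μ.prod ν))
    (hK_nonneg : ∀ a b, 0 ≤ K a b) {f : α → ℝ} {g : β → ℝ}
    (hf : ∀ᵐ a ∂μ, ∫ b, K a b ∂ν = f a)
    (hg : ∀ᵐ b ∂ν, Integrable (fun a ↦ K a b) μ ∧ ∫ a, K a b ∂μ = g b)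
    (hg_int : Integrable g ν) :
    Integrable f μ ∧ ∫ a, f a ∂μ = ∫ b, g b ∂ν := by
  have hK_int : Integrable (uncurry K) (μ.prod ν) := by
    refine (integrable_prod_iff' hK).2 ⟨hg.mono fun b hb ↦ hb.1, hg_int.congr ?_⟩
    filter_upwards [hg] with b hb
    simp only [uncurry_apply_pair, Real.norm_of_nonneg (hK_nonneg _ _), hb.2]
  refine ⟨hK_int.integral_prod_left.congr hf, ?_⟩
  calc ∫ a, f a ∂μ = ∫ a, ∫ b, K a b ∂ν ∂μ := integral_congr_ae (hf.mono fun a ha ↦ ha.symm)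
    _ = ∫ b, ∫ a, K a b ∂μ ∂ν := integral_integral_swap hK_int
    _ = ∫ b, g b ∂ν := integral_congr_ae (hg.mono fun b hb ↦ hb.2)

theorem integral_pow_mul_exp_neg_mul_Ioi (n : ℕ) {b : ℝ} (hb : 0 < b) :
    ∫ x in Ioi 0, x ^ n * exp (-b * x) = (n.factorial : ℝ) / b ^ (n + 1) := by
  have := integral_rpow_mul_exp_neg_mul_rpow (q := n) one_pos
    (by linarith [n.cast_nonneg (α := ℝ)]) hb
  simp only [Real.rpow_natCast, Real.rpow_one, div_one, Real.Gamma_nat_eq_factorial] at this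
  rw [this, Real.rpow_neg hb.le, ← Nat.cast_succ, Real.rpow_natCast]
  field_simp

theorem integrableOn_exp_neg_mul_mul_cos_Ioi {b : ℝ} (hb : 0 < b) (a : ℝ) :
    IntegrableOn (fun x ↦ exp (-b * x) * cos (a * x)) (Ioi 0) := by
  have : IntegrableOn (fun x : ℝ ↦ RCLike.re (Complex.exp ((-b + a * Complex.I) * x))) (Ioi 0) :=
    (integrableOn_exp_mul_complex_Ioi (by simpa using hb) 0).re
  refine this.congr_fun (fun x _ ↦ ?_) measurableSet_Ioi
  simp [Complex.exp_re]

theorem integral_exp_neg_mul_mul_cos_Ioi {b : ℝ} (hb : 0 < b) (a : ℝ) :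
    ∫ x in Ioi 0, exp (-b * x) * cos (a * x) = b / (b ^ 2 + a ^ 2) := by
  have hc : (-b + a * Complex.I).re < 0 := by simpa using hb
  have h := integral_re (integrableOn_exp_mul_complex_Ioi hc 0)
  rw [integral_exp_mul_complex_Ioi hc 0] at h
  convert h using 1
  · refine setIntegral_congr_fun measurableSet_Ioi (fun x _ ↦ ?_)
    simp [Complex.exp_re]
  · simp [Complex.div_re, Complex.normSq]
    field_simp

theorem sin_half_pow_four (x : ℝ) : sin (x / 2) ^ 4 = (3 - 4 * cos x + cos (2 * x)) / 8 := by
  have h : sin (x / 2) ^ 2 = (1 - cos x) / 2 := by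
    rw [sin_sq, cos_sq, mul_div_cancel₀ x two_ne_zero]; ring
  linear_combination (sin (x / 2) ^ 2 + (1 - cos x) / 2) * h + 1 / 4 * cos_sq x

-- Written with `cos (a * x)`, `a = 0, 1, 2`, so that each term matches the Laplace transform above.
theorem exp_neg_mul_mul_sin_half_pow_four (b x : ℝ) :
    exp (-b * x) * sin (x / 2) ^ 4 = (3 * (exp (-b * x) * cos (0 * x))
      - 4 * (exp (-b * x) * cos (1 * x)) + exp (-b * x) * cos (2 * x)) / 8 := by
  rw [sin_half_pow_four, zero_mul, cos_zero, one_mul]; ring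

theorem integrableOn_exp_neg_mul_mul_sin_half_pow_four_Ioi {b : ℝ} (hb : 0 < b) :
    IntegrableOn (fun x ↦ exp (-b * x) * sin (x / 2) ^ 4) (Ioi 0) := by
  simp only [exp_neg_mul_mul_sin_half_pow_four]
  exact ((((integrableOn_exp_neg_mul_mul_cos_Ioi hb 0).const_mul 3).sub
    ((integrableOn_exp_neg_mul_mul_cos_Ioi hb 1).const_mul 4)).add
    (integrableOn_exp_neg_mul_mul_cos_Ioi hb 2)).div_const 8

theorem integral_exp_neg_mul_mul_sin_half_pow_four_Ioi {b : ℝ} (hb : 0 < b) :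
    ∫ x in Ioi 0, exp (-b * x) * sin (x / 2) ^ 4 = 3 / (2 * b * (b ^ 2 + 1) * (b ^ 2 + 4)) := by
  have hcos := integrableOn_exp_neg_mul_mul_cos_Ioi hb
  simp only [exp_neg_mul_mul_sin_half_pow_four]
  rw [integral_div, integral_add (by exact ((hcos 0).const_mul 3).sub ((hcos 1).const_mul 4))
    (hcos 2), integral_sub ((hcos 0).const_mul 3) ((hcos 1).const_mul 4), integral_const_mul,
    integral_const_mul]
  simp only [integral_exp_neg_mul_mul_cos_Ioi hb]
  field_simp
  ring

theorem hasDerivAt_log_add_sq_div_add_sq {p q : ℝ} (hp : 0 < p) (hq : 0 < q) (hpq : p ≠ q)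
    (x : ℝ) :
    HasDerivAt (fun x ↦ log ((x ^ 2 + p) / (x ^ 2 + q)) / (2 * (q - p)))
      (x / ((x ^ 2 + p) * (x ^ 2 + q))) x := by
  have hxp : x ^ 2 + p ≠ 0 := by positivity
  have hxq : x ^ 2 + q ≠ 0 := by positivity
  have hqp : q - p ≠ 0 := sub_ne_zero.2 hpq.symm
  have h := ((((hasDerivAt_pow 2 x).add_const p).fun_div ((hasDerivAt_pow 2 x).add_const q)
    hxq).log (div_ne_zero hxp hxq)).div_const (2 * (q - p))
  refine h.congr_deriv ?_
  norm_num
  field_simp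
  ring

theorem tendsto_log_add_sq_div_add_sq_atTop (p q : ℝ) :
    Tendsto (fun x : ℝ ↦ log ((x ^ 2 + p) / (x ^ 2 + q))) atTop (𝓝 0) := by
  have hden : Tendsto (fun x : ℝ ↦ x ^ 2 + q) atTop atTop :=
    tendsto_atTop_add_const_right _ q (tendsto_pow_atTop two_ne_zero)
  have hratio : Tendsto (fun x : ℝ ↦ (x ^ 2 + p) / (x ^ 2 + q)) atTop (𝓝 1) := by
    have h := (tendsto_const_nhds (x := p - q)).div_atTop hden |>.const_add 1
    rw [add_zero] at h
    refine h.congr' ?_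
    filter_upwards [hden.eventually_gt_atTop 0] with x hx
    field_simp
    ring
  simpa using hratio.log one_ne_zero

theorem integrableOn_div_mul_add_sq_Ioi {p q : ℝ} (hp : 0 < p) (hq : 0 < q) (hpq : p ≠ q) :
    IntegrableOn (fun x : ℝ ↦ x / ((x ^ 2 + p) * (x ^ 2 + q))) (Ioi 0) :=
  integrableOn_Ioi_deriv_of_nonneg' (fun x _ ↦ hasDerivAt_log_add_sq_div_add_sq hp hq hpq x)
    (fun x (hx : 0 < x) ↦ by positivity)
    ((tendsto_log_add_sq_div_add_sq_atTop p q).div_const _)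

theorem integral_div_mul_add_sq_Ioi {p q : ℝ} (hp : 0 < p) (hq : 0 < q) (hpq : p ≠ q) :
    ∫ x in Ioi 0, x / ((x ^ 2 + p) * (x ^ 2 + q)) = log (q / p) / (2 * (q - p)) := by
  rw [integral_Ioi_of_hasDerivAt_of_nonneg'
    (fun x _ ↦ hasDerivAt_log_add_sq_div_add_sq hp hq hpq x)
    (fun x (hx : 0 < x) ↦ by positivity)
    ((tendsto_log_add_sq_div_add_sq_atTop p q).div_const _)]
  have : log (p / q) = -log (q / p) := by rw [← log_inv, inv_div]
  simp [this, neg_div]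

theorem integral_sin_pow_four_div_cube :
    IntegrableOn (fun v : ℝ => Real.sin (v / 2) ^ 4 / v ^ 3) (Set.Ioi 0) volume ∧
    (∫ v in Set.Ioi (0 : ℝ), Real.sin (v / 2) ^ 4 / v ^ 3) = Real.log 2 / 4 := by
  have h_dt : ∀ᵐ v ∂volume.restrict (Ioi (0 : ℝ)),
      ∫ t in Ioi 0, sin (v / 2) ^ 4 * (t ^ 2 * exp (-v * t)) / 2 = sin (v / 2) ^ 4 / v ^ 3 := by
    filter_upwards [ae_restrict_mem measurableSet_Ioi] with v (hv : 0 < v)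
    rw [integral_div, integral_const_mul, integral_pow_mul_exp_neg_mul_Ioi 2 hv]
    simp only [Nat.factorial_two, Nat.cast_ofNat]
    field_simp
    ring
  have h_dv : ∀ᵐ t ∂volume.restrict (Ioi (0 : ℝ)),
      IntegrableOn (fun v ↦ sin (v / 2) ^ 4 * (t ^ 2 * exp (-v * t)) / 2) (Ioi 0) ∧
      ∫ v in Ioi 0, sin (v / 2) ^ 4 * (t ^ 2 * exp (-v * t)) / 2
        = 3 / 4 * (t / ((t ^ 2 + 1) * (t ^ 2 + 4))) := by
    filter_upwards [ae_restrict_mem measurableSet_Ioi] with t (ht : 0 < t)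
    have hK : ∀ v, sin (v / 2) ^ 4 * (t ^ 2 * exp (-v * t)) / 2
        = t ^ 2 / 2 * (exp (-t * v) * sin (v / 2) ^ 4) := fun v ↦ by ring_nf
    simp only [hK]
    refine ⟨(integrableOn_exp_neg_mul_mul_sin_half_pow_four_Ioi ht).const_mul _, ?_⟩
    rw [integral_const_mul, integral_exp_neg_mul_mul_sin_half_pow_four_Ioi ht]
    field_simp
    ring
  obtain ⟨h_int, h_eq⟩ := integrable_and_integral_eq_of_nonneg_kernel (by fun_prop)
    (fun v t ↦ by positivity) h_dt h_dv
    ((integrableOn_div_mul_add_sq_Ioi one_pos four_pos (by norm_num)).const_mul (3 / 4))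
  refine ⟨h_int, h_eq.trans ?_⟩
  rw [integral_const_mul, integral_div_mul_add_sq_Ioi one_pos four_pos (by norm_num),
    show (4 : ℝ) / 1 = 2 ^ 2 by norm_num, log_pow]
  ring
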